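/- arXiv:2006.02495 — 5 statements merged into one kernel-verified Lean document; each statement's English description precedes it below -/
import Mathlib

section
/- Let A, P, P̂ ∈ ℝ^{n×n}, B ∈ ℝ^{n×m}, X₀ ∈ ℝ^{n×q}, and let α, β > 0. Suppose A P + P Aᵀ + B Bᵀ = 0 and A P̂ + P̂ Aᵀ + X₀ X₀ᵀ = 0. Define S := (1/(β·√(2α))) (A + α I_n) and 𝒫 := P + S P̂ Sᵀ. Then A 𝒫 + 𝒫 Aᵀ + B Bᵀ + (S X₀)(S X₀)ᵀ = 0; that is, 𝒫 is the controllability Gramian of the system with input matrix [B S X₀]. -/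
open Matrix

/-- The controllability Gramian of the expanded system `[B  S X₀]` with
`S = (1/(β√(2α)))(A + αI)` is `P + S P̂ Sᵀ`. -/
theorem expanded_gramian
    {n m q : ℕ}
    (A P Phat : Matrix (Fin n) (Fin n) ℝ) (B : Matrix (Fin n) (Fin m) ℝ)
    (X₀ : Matrix (Fin n) (Fin q) ℝ) (α β : ℝ) (hα : 0 < α) (hβ : 0 < β)
    (hP : A * P + P * Aᵀ + B * Bᵀ = 0)
    (hPhat : A * Phat + Phat * Aᵀ + X₀ * X₀ᵀ = 0)
    (S : Matrix (Fin n) (Fin n) ℝ)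
    (hS : S = (1 / (β * Real.sqrt (2 * α))) • (A + α • (1 : Matrix (Fin n) (Fin n) ℝ)))
    (Pcal : Matrix (Fin n) (Fin n) ℝ)
    (hPcal : Pcal = P + S * Phat * Sᵀ) :
    A * Pcal + Pcal * Aᵀ + B * Bᵀ + (S * X₀) * (S * X₀)ᵀ = 0 := by
  have hAS : A * S = S * A := by
    subst hS
    simp only [Matrix.mul_smul, Matrix.smul_mul, mul_add, add_mul,
      Matrix.mul_one, Matrix.one_mul, Matrix.mul_smul, Matrix.smul_mul]
  have hASt : Sᵀ * Aᵀ = Aᵀ * Sᵀ := by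
    rw [← Matrix.transpose_mul, ← Matrix.transpose_mul, hAS]
  have key : A * Pcal + Pcal * Aᵀ + B * Bᵀ + (S * X₀) * (S * X₀)ᵀ
      = (A * P + P * Aᵀ + B * Bᵀ) + S * (A * Phat + Phat * Aᵀ + X₀ * X₀ᵀ) * Sᵀ := by
    subst hPcal
    have h1 : A * (S * Phat * Sᵀ) = S * (A * Phat) * Sᵀ := by
      rw [← Matrix.mul_assoc, ← Matrix.mul_assoc, hAS, Matrix.mul_assoc S]
    have h2 : (S * Phat * Sᵀ) * Aᵀ = S * (Phat * Aᵀ) * Sᵀ := by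
      rw [Matrix.mul_assoc (S * Phat), hASt, ← Matrix.mul_assoc, Matrix.mul_assoc S]
    have h3 : (S * X₀) * (S * X₀)ᵀ = S * (X₀ * X₀ᵀ) * Sᵀ := by
      rw [Matrix.transpose_mul]
      simp [Matrix.mul_assoc]
    rw [mul_add, add_mul, h1, h2, h3]
    noncomm_ring
  rw [key, hP, hPhat]
  simp
end

section
/- Let U, Z > 0 be real numbers and let c : (0,∞) → [0,∞) be a function such that c is antitone (β₁ ≤ β₂ implies c(β₂) ≤ c(β₁)) and β ↦ β·c(β) is monotone (β₁ ≤ β₂ implies β₁·c(β₁) ≤ β₂·c(β₂)). Define e(β) := c(β)·(U + β·Z) and β_heur := U/Z. Then for every β > 0, e(β_heur) ≤ 2·e(β). -/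
/-- Suboptimality of the heuristic choice `β_heur = U/Z`: for any fixed `α`,
`e(β_heur) ≤ 2 e(β)` for all `β > 0`. -/
theorem beta_heur_suboptimality
    (U Z : ℝ) (hU : 0 < U) (hZ : 0 < Z)
    (c : ℝ → ℝ) (hc0 : ∀ β, 0 < β → 0 ≤ c β)
    (hanti : ∀ β₁ β₂, 0 < β₁ → 0 < β₂ → β₁ ≤ β₂ → c β₂ ≤ c β₁)
    (hmono : ∀ β₁ β₂, 0 < β₁ → 0 < β₂ → β₁ ≤ β₂ → β₁ * c β₁ ≤ β₂ * c β₂) :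
    ∀ β, 0 < β → c (U / Z) * (U + (U / Z) * Z) ≤ 2 * (c β * (U + β * Z)) := by
  intro β hβ
  have hβh : 0 < U / Z := div_pos hU hZ
  have hUZ : U / Z * Z = U := div_mul_cancel₀ U (ne_of_gt hZ)
  rw [hUZ]
  have hcβ := hc0 β hβ
  rcases le_total β (U / Z) with h | h
  · have hle : c (U / Z) ≤ c β := hanti β (U / Z) hβ hβh h
    have h1 : c (U / Z) * (U + U) ≤ c β * (U + U) := by
      apply mul_le_mul_of_nonneg_right hle; positivity
    refine h1.trans ?_
    have : 0 ≤ c β * (β * Z) := by positivity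
    nlinarith
  · have hle : U / Z * c (U / Z) ≤ β * c β := hmono (U / Z) β hβh hβ h
    have h1 : U * c (U / Z) ≤ β * c β * Z := by
      have := mul_le_mul_of_nonneg_right hle (le_of_lt hZ)
      calc U * c (U / Z) = U / Z * c (U / Z) * Z := by field_simp
        _ ≤ β * c β * Z := this
    nlinarith
end

section
/- Let U, Z > 0 be real numbers and let c : (0,∞) × (0,∞) → [0,∞) be a function such that for every fixed α > 0, β ↦ c(α,β) is antitone and β ↦ β·c(α,β) is monotone on (0,∞). Define e(α,β) := c(α,β)·(U + β·Z) and β_heur := U/Z. Then inf_{α>0} e(α, β_heur) ≤ 2 · inf_{α>0, β>0} e(α,β). -/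
/-- Suboptimality of the heuristic choice `β_heur = U/Z` after minimizing over `α`:
`inf_{α>0} e(α,β_heur) ≤ 2 inf_{α>0,β>0} e(α,β)`. -/
theorem beta_heur_suboptimality_inf
    (U Z : ℝ) (hU : 0 < U) (hZ : 0 < Z)
    (c : ℝ → ℝ → ℝ) (hc0 : ∀ α β, 0 < α → 0 < β → 0 ≤ c α β)
    (hanti : ∀ α, 0 < α → ∀ β₁ β₂, 0 < β₁ → 0 < β₂ → β₁ ≤ β₂ → c α β₂ ≤ c α β₁)
    (hmono : ∀ α, 0 < α → ∀ β₁ β₂, 0 < β₁ → 0 < β₂ → β₁ ≤ β₂ →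
      β₁ * c α β₁ ≤ β₂ * c α β₂) :
    sInf {x : ℝ | ∃ α, 0 < α ∧ x = c α (U / Z) * (U + (U / Z) * Z)} ≤
      2 * sInf {x : ℝ | ∃ α β, 0 < α ∧ 0 < β ∧ x = c α β * (U + β * Z)} := by
  set βh : ℝ := U / Z with hβh
  have hβhpos : 0 < βh := div_pos hU hZ
  have hβhZ : βh * Z = U := div_mul_cancel₀ U hZ.ne'
  set S₁ := {x : ℝ | ∃ α, 0 < α ∧ x = c α βh * (U + βh * Z)} with hS₁
  set S₂ := {x : ℝ | ∃ α β, 0 < α ∧ 0 < β ∧ x = c α β * (U + β * Z)} with hS₂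
  have hbdd : BddBelow S₁ := by
    refine ⟨0, fun x hx => ?_⟩
    obtain ⟨α, hα, rfl⟩ := hx
    have := hc0 α βh hα hβhpos
    positivity
  -- key pointwise claim: for every element x of S₂, sInf S₁ ≤ 2 * x
  have key : ∀ x ∈ S₂, sInf S₁ / 2 ≤ x := by
    rintro x ⟨α, β, hα, hβ, rfl⟩
    have hmem : c α βh * (U + βh * Z) ∈ S₁ := ⟨α, hα, rfl⟩
    have h1 : sInf S₁ ≤ c α βh * (U + βh * Z) := csInf_le hbdd hmem
    have hkey : c α βh * (U + βh * Z) ≤ 2 * (c α β * (U + β * Z)) := by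
      rw [hβhZ]
      rcases le_total β βh with h | h
      · have hc := hanti α hα β βh hβ hβhpos h
        have h0 : 0 ≤ c α β := hc0 α β hα hβ
        nlinarith [mul_pos hβ hZ]
      · have hm := hmono α hα βh β hβhpos hβ h
        have h0 : 0 ≤ c α β := hc0 α β hα hβ
        have : U * c α βh ≤ β * Z * c α β := by
          calc U * c α βh = Z * (βh * c α βh) := by rw [← hβhZ]; ring
          _ ≤ Z * (β * c α β) := by nlinarith
          _ = β * Z * c α β := by ring
        nlinarith
    linarith
  have hne : S₂.Nonempty := ⟨c 1 1 * (U + 1 * Z), 1, 1, one_pos, one_pos, rfl⟩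
  have := le_csInf hne key
  linarith
end

section
/- Let U, Z > 0 be real numbers and let c : (0,∞) → [0,∞) be antitone such that β ↦ β·c(β) is monotone. Define μ(β) := max{c(β)·U, β·c(β)·Z}, e(β) := c(β)·(U + β·Z), and β_heur := U/Z. Then β_heur minimizes μ, i.e., μ(β_heur) ≤ μ(β) for all β > 0; moreover e(β_heur) = 2·μ(β_heur), and e(β) ≥ μ(β) for all β > 0. -/
/-- The heuristic `β_heur = U/Z` minimizes `μ(β) = max{c(β)U, βc(β)Z}`;
moreover `e(β_heur) = 2 μ(β_heur)` and `e(β) ≥ μ(β)`. -/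
theorem beta_heur_minimizes_mu
    (U Z : ℝ) (hU : 0 < U) (hZ : 0 < Z)
    (c : ℝ → ℝ) (hc0 : ∀ β, 0 < β → 0 ≤ c β)
    (hanti : ∀ β₁ β₂, 0 < β₁ → 0 < β₂ → β₁ ≤ β₂ → c β₂ ≤ c β₁)
    (hmono : ∀ β₁ β₂, 0 < β₁ → 0 < β₂ → β₁ ≤ β₂ → β₁ * c β₁ ≤ β₂ * c β₂) :
    (∀ β, 0 < β →
      max (c (U / Z) * U) ((U / Z) * c (U / Z) * Z) ≤ max (c β * U) (β * c β * Z)) ∧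
    c (U / Z) * (U + (U / Z) * Z) = 2 * max (c (U / Z) * U) ((U / Z) * c (U / Z) * Z) ∧
    (∀ β, 0 < β → max (c β * U) (β * c β * Z) ≤ c β * (U + β * Z)) := by
  have hb0 : 0 < U / Z := div_pos hU hZ
  have hUZ : (U / Z) * Z = U := div_mul_cancel₀ U hZ.ne'
  have heq : (U / Z) * c (U / Z) * Z = c (U / Z) * U := by
    calc (U / Z) * c (U / Z) * Z = c (U / Z) * ((U / Z) * Z) := by ring
    _ = c (U / Z) * U := by rw [hUZ]
  have hmax : max (c (U / Z) * U) ((U / Z) * c (U / Z) * Z) = c (U / Z) * U := by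
    rw [heq, max_self]
  refine ⟨?_, ?_, ?_⟩
  · intro β hβ
    rw [hmax]
    rcases le_total β (U / Z) with h | h
    · exact le_max_of_le_left (mul_le_mul_of_nonneg_right
        (hanti β (U / Z) hβ hb0 h) hU.le)
    · refine le_max_of_le_right ?_
      have := hmono (U / Z) β hb0 hβ h
      calc c (U / Z) * U = (U / Z) * c (U / Z) * Z := heq.symm
      _ ≤ β * c β * Z := mul_le_mul_of_nonneg_right this hZ.le
  · rw [hmax, hUZ]; ring
  · intro β hβ
    have h1 : 0 ≤ c β := hc0 β hβ
    apply max_le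
    · nlinarith [mul_pos hβ hZ]
    · nlinarith
end

section
/- Let A ∈ ℝ^{n×n} and X₀ ∈ ℝ^{n×q} with X₀ ≠ 0 and A X₀ ≠ 0, and set α_heur := ‖A X₀‖_F / ‖X₀‖_F. Then α_heur minimizes α ↦ ‖(A + α I_n) X₀‖_F² / α over α > 0; that is, for every α > 0, ‖(A + α_heur I_n) X₀‖_F² / α_heur ≤ ‖(A + α I_n) X₀‖_F² / α. -/
/-! Since `‖u + α • v‖² / α = ‖u‖² / α + 2⟪u, v⟫ + α ‖v‖²`, only `‖u‖² / α + α ‖v‖²` depends on `α`,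
and by AM-GM it is at least `2 ‖u‖ ‖v‖`, with equality at `α = ‖u‖ / ‖v‖`. Take `u = A X₀` and
`v = X₀`, viewed as vectors in the Euclidean space of matrix entries. -/

open Matrix

theorem sq_div_add_mul_sq_le_of_div {a b α : ℝ} (hb : b ≠ 0) (hα : 0 < α) :
    a ^ 2 / (a / b) + a / b * b ^ 2 ≤ a ^ 2 / α + α * b ^ 2 := by
  have at_ratio : a ^ 2 / (a / b) + a / b * b ^ 2 = 2 * a * b := by
    rcases eq_or_ne a 0 with rfl | ha
    · simp
    · field_simp
      ring
  have gap : a ^ 2 / α + α * b ^ 2 - 2 * a * b = (a - α * b) ^ 2 / α := by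
    field_simp
    ring
  have : 0 ≤ (a - α * b) ^ 2 / α := by positivity
  linarith

section InnerProductSpace

variable {E : Type*} [NormedAddCommGroup E] [InnerProductSpace ℝ E]

open RealInnerProductSpace

theorem norm_add_smul_sq_div (u v : E) {α : ℝ} (hα : α ≠ 0) :
    ‖u + α • v‖ ^ 2 / α = ‖u‖ ^ 2 / α + 2 * ⟪u, v⟫ + α * ‖v‖ ^ 2 := by
  rw [norm_add_sq_real, real_inner_smul_right, norm_smul, mul_pow, Real.norm_eq_abs, sq_abs]
  field_simp

theorem norm_add_smul_sq_div_le_of_div_norm (u v : E) {α : ℝ} (hα : 0 < α) :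
    ‖u + (‖u‖ / ‖v‖) • v‖ ^ 2 / (‖u‖ / ‖v‖) ≤ ‖u + α • v‖ ^ 2 / α := by
  rcases eq_or_ne (‖u‖ / ‖v‖) 0 with hratio | hratio
  · -- the left side is a junk value `x / 0 = 0`
    rw [hratio, div_zero]
    positivity
  have hv : ‖v‖ ≠ 0 := fun h => hratio (by rw [h, div_zero])
  rw [norm_add_smul_sq_div u v hratio, norm_add_smul_sq_div u v hα.ne']
  linarith [sq_div_add_mul_sq_le_of_div (a := ‖u‖) hv hα]

end InnerProductSpace

namespace Matrix

variable {m n : Type*} [Fintype m] [Fintype n]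

def toEuclideanSpace : Matrix m n ℝ →ₗ[ℝ] EuclideanSpace ℝ (m × n) where
  toFun M := WithLp.toLp 2 fun p => M p.1 p.2
  map_add' _ _ := rfl
  map_smul' _ _ := rfl

theorem norm_toEuclideanSpace (M : Matrix m n ℝ) :
    ‖toEuclideanSpace M‖ = Real.sqrt (∑ i, ∑ j, M i j ^ 2) := by
  rw [EuclideanSpace.norm_eq, Fintype.sum_prod_type]
  simp only [Real.norm_eq_abs, sq_abs]
  rfl

end Matrix

theorem alpha_heur_minimizes_general
    {n q : ℕ}
    (A : Matrix (Fin n) (Fin n) ℝ) (X₀ : Matrix (Fin n) (Fin q) ℝ)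
    (frob : Matrix (Fin n) (Fin q) ℝ → ℝ)
    (hfrob : ∀ M, frob M = Real.sqrt (∑ i, ∑ j, M i j ^ 2))
    (αh : ℝ) (hαh : αh = frob (A * X₀) / frob X₀) :
    ∀ α, 0 < α →
      frob ((A + αh • (1 : Matrix (Fin n) (Fin n) ℝ)) * X₀) ^ 2 / αh ≤
      frob ((A + α • (1 : Matrix (Fin n) (Fin n) ℝ)) * X₀) ^ 2 / α := by
  intro α hα
  have hfrob_norm : ∀ M, frob M = ‖toEuclideanSpace M‖ := fun M => by
    rw [hfrob, norm_toEuclideanSpace]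
  have shift : ∀ β : ℝ, toEuclideanSpace ((A + β • (1 : Matrix (Fin n) (Fin n) ℝ)) * X₀) =
      toEuclideanSpace (A * X₀) + β • toEuclideanSpace X₀ := fun β => by
    rw [Matrix.add_mul, Matrix.smul_mul, Matrix.one_mul, map_add, map_smul]
  simp only [hfrob_norm, shift] at hαh ⊢
  subst hαh
  exact norm_add_smul_sq_div_le_of_div_norm _ _ hα

/-- The heuristic `α_heur = ‖A X₀‖_F / ‖X₀‖_F` minimizes
`α ↦ ‖(A + α I) X₀‖_F² / α` over `α > 0`. -/
theorem alpha_heur_minimizes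
    {n q : ℕ}
    (A : Matrix (Fin n) (Fin n) ℝ) (X₀ : Matrix (Fin n) (Fin q) ℝ)
    (hX₀ : X₀ ≠ 0) (hAX₀ : A * X₀ ≠ 0)
    (frob : Matrix (Fin n) (Fin q) ℝ → ℝ)
    (hfrob : ∀ M, frob M = Real.sqrt (∑ i, ∑ j, M i j ^ 2))
    (αh : ℝ) (hαh : αh = frob (A * X₀) / frob X₀) :
    ∀ α, 0 < α →
      frob ((A + αh • (1 : Matrix (Fin n) (Fin n) ℝ)) * X₀) ^ 2 / αh ≤
      frob ((A + α • (1 : Matrix (Fin n) (Fin n) ℝ)) * X₀) ^ 2 / α :=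
  alpha_heur_minimizes_general A X₀ frob hfrob αh hαh
end
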